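/- For any pair of matrices X, X̃ ∈ ℝ^{m₁×m₂}, ‖X + P⊥_X(X̃)‖_{σ,1} = ‖X‖_{σ,1} + ‖P⊥_X(X̃)‖_{σ,1}. -/

import Mathlib

open MeasureTheory ProbabilityTheory Matrix

/-- Singular values of a rectangular real matrix: square roots of the
eigenvalues of `Xᵀ * X`. -/
noncomputable def singVals {m₁ m₂ : ℕ} (X : Matrix (Fin m₁) (Fin m₂) ℝ) : Fin m₂ → ℝ :=
  fun i => Real.sqrt (((by simpa [Matrix.conjTranspose_eq_transpose_of_trivial] using Matrix.isHermitian_conjTranspose_mul_self X : (Xᵀ * X).IsHermitian)).eigenvalues i)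

/-- Nuclear (Schatten-1) norm `‖·‖_{σ,1}`. -/
noncomputable def nucNorm {m₁ m₂ : ℕ} (X : Matrix (Fin m₁) (Fin m₂) ℝ) : ℝ :=
  ∑ i, singVals X i

/-- Operator (Schatten-∞) norm `‖·‖_{σ,∞}`: the largest singular value. -/
noncomputable def opNorm {m₁ m₂ : ℕ} (X : Matrix (Fin m₁) (Fin m₂) ℝ) : ℝ :=
  ⨆ i, singVals X i

/-- Frobenius (Schatten-2) norm `‖·‖_{σ,2}`. -/
noncomputable def frobNorm {m₁ m₂ : ℕ} (X : Matrix (Fin m₁) (Fin m₂) ℝ) : ℝ :=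
  Real.sqrt (∑ k, ∑ l, (X k l) ^ 2)

/-- Entrywise sup norm `‖·‖_∞`. -/
noncomputable def linfNorm {m₁ m₂ : ℕ} (X : Matrix (Fin m₁) (Fin m₂) ℝ) : ℝ :=
  ⨆ p : Fin m₁ × Fin m₂, |X p.1 p.2|

/-- The matrix of the orthogonal projection onto a subspace `S` of `ℝ^k`. -/
noncomputable def projM {k : ℕ} (S : Submodule ℝ (EuclideanSpace ℝ (Fin k))) :
    Matrix (Fin k) (Fin k) ℝ :=
  LinearMap.toMatrix (EuclideanSpace.basisFun (Fin k) ℝ).toBasis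
    (EuclideanSpace.basisFun (Fin k) ℝ).toBasis
    (S.subtype ∘ₗ (Submodule.orthogonalProjectionOnto S).toLinearMap)

/-- The span `S₁(X)` of the left singular vectors of `X`, i.e. its column space
(`S₂(X)`, the span of the right singular vectors, is `colSpace Xᵀ`). -/
noncomputable def colSpace {m₁ m₂ : ℕ} (X : Matrix (Fin m₁) (Fin m₂) ℝ) :
    Submodule ℝ (EuclideanSpace ℝ (Fin m₁)) :=
  LinearMap.range (Matrix.toEuclideanLin X)

/-- The projection `P⊥_X(T) = P_{S₁(X)⊥} T P_{S₂(X)⊥}`. -/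
noncomputable def Pperp {m₁ m₂ : ℕ} (X T : Matrix (Fin m₁) (Fin m₂) ℝ) :
    Matrix (Fin m₁) (Fin m₂) ℝ :=
  projM (Submodule.orthogonal (colSpace X)) * T * projM (Submodule.orthogonal (colSpace Xᵀ))

/-- The projection `P_X(T) = T - P⊥_X(T)`. -/
noncomputable def Ppar {m₁ m₂ : ℕ} (X T : Matrix (Fin m₁) (Fin m₂) ℝ) :
    Matrix (Fin m₁) (Fin m₂) ℝ :=
  T - Pperp X T

/-!
Write `Y = P⊥_X(X̃)`. Its column space is orthogonal to that of `X` and its row space to that of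
`Xᵀ`, so `Xᵀ Y = 0` and `X Yᵀ = 0`. Hence `(X + Y)ᵀ (X + Y) = Xᵀ X + Yᵀ Y` with
`(Xᵀ X)(Yᵀ Y) = 0`. The nuclear norm is `tr √(Xᵀ X)`, and square roots of positive semidefinite
matrices with vanishing product add, since then `√A √B = 0` and `(√A + √B)² = A + B`.
-/

open scoped MatrixOrder ComplexOrder

namespace Matrix

lemma posSemidef_transpose_mul_self {m n : Type*} [Fintype m] [Fintype n] (X : Matrix m n ℝ) :
    (Xᵀ * X).PosSemidef := by
  simpa using posSemidef_conjTranspose_mul_self X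

variable {n 𝕜 : Type*} [Fintype n] [DecidableEq n] [RCLike 𝕜]

lemma IsHermitian.trace_cfc {A : Matrix n n 𝕜} (hA : A.IsHermitian) (f : ℝ → ℝ) :
    (cfc f A).trace = ∑ i, (f (hA.eigenvalues i) : 𝕜) := by
  rw [hA.cfc_eq, IsHermitian.cfc, Unitary.conjStarAlgAut_apply, trace_mul_cycle,
    Unitary.coe_star_mul_self, one_mul, trace_diagonal]
  rfl

lemma PosSemidef.trace_sqrt {A : Matrix n n 𝕜} (hA : A.PosSemidef) :
    (CFC.sqrt A).trace = ∑ i, (√(hA.1.eigenvalues i) : 𝕜) := by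
  rw [CFC.sqrt_eq_real_sqrt A hA.nonneg, cfcₙ_eq_cfc, hA.1.trace_cfc]

lemma PosSemidef.sqrt_mul_sqrt_eq_zero {A B : Matrix n n 𝕜} (hA : A.PosSemidef)
    (hB : B.PosSemidef) (h : A * B = 0) : CFC.sqrt A * CFC.sqrt B = 0 := by
  set a := CFC.sqrt A
  set b := CFC.sqrt B
  have ha : aᴴ = a := (CFC.sqrt_nonneg A).posSemidef.1.eq
  have hb : bᴴ = b := (CFC.sqrt_nonneg B).posSemidef.1.eq
  have hab : (aᴴ * a) * (b * bᴴ) = 0 := by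
    rwa [ha, hb, CFC.sqrt_mul_sqrt_self A hA.nonneg, CFC.sqrt_mul_sqrt_self B hB.nonneg]
  rwa [conjTranspose_mul_self_mul_eq_zero, mul_self_mul_conjTranspose_eq_zero] at hab

lemma PosSemidef.sqrt_add_of_mul_eq_zero {A B : Matrix n n 𝕜} (hA : A.PosSemidef)
    (hB : B.PosSemidef) (h : A * B = 0) : CFC.sqrt (A + B) = CFC.sqrt A + CFC.sqrt B := by
  have hab := hA.sqrt_mul_sqrt_eq_zero hB h
  have hba : CFC.sqrt B * CFC.sqrt A = 0 := by
    simpa [(CFC.sqrt_nonneg A).posSemidef.1.eq, (CFC.sqrt_nonneg B).posSemidef.1.eq]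
      using congrArg (·ᴴ) hab
  refine CFC.sqrt_unique ?_ (add_nonneg (CFC.sqrt_nonneg A) (CFC.sqrt_nonneg B))
  rw [add_mul, mul_add, mul_add, hab, hba, CFC.sqrt_mul_sqrt_self A hA.nonneg,
    CFC.sqrt_mul_sqrt_self B hB.nonneg, add_zero, zero_add]

end Matrix

lemma toEuclideanLin_projM {k : ℕ} (S : Submodule ℝ (EuclideanSpace ℝ (Fin k))) :
    toEuclideanLin (projM S) = S.starProjection := by
  rw [toEuclideanLin_eq_toLin_orthonormal, projM, toLin_toMatrix]
  rfl

lemma projM_transpose {k : ℕ} (S : Submodule ℝ (EuclideanSpace ℝ (Fin k))) :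
    (projM S)ᵀ = projM S := by
  have h : (projM S).IsHermitian := by
    rw [← isSymmetric_toEuclideanLin_iff, toEuclideanLin_projM]
    exact S.starProjection_isSymmetric
  simpa using h.eq

lemma projM_orthogonal_colSpace_mul {m₁ m₂ : ℕ} (X : Matrix (Fin m₁) (Fin m₂) ℝ) :
    projM (colSpace X)ᗮ * X = 0 := by
  refine toEuclideanLin.injective (LinearMap.ext fun v => ?_)
  have hmem : toEuclideanLin X v ∈ (colSpace X)ᗮᗮ :=
    (colSpace X).le_orthogonal_orthogonal (LinearMap.mem_range_self _ v)
  have h : toEuclideanLin (projM (colSpace X)ᗮ) (toEuclideanLin X v) = 0 := by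
    rw [toEuclideanLin_projM]
    exact (colSpace X)ᗮ.starProjection_apply_eq_zero_iff.mpr hmem
  simpa [mulVec_mulVec] using h

lemma transpose_mul_Pperp {m₁ m₂ : ℕ} (X T : Matrix (Fin m₁) (Fin m₂) ℝ) :
    Xᵀ * Pperp X T = 0 := by
  have h : Xᵀ * projM (colSpace X)ᗮ = 0 := by
    simpa [projM_transpose] using congrArg (·ᵀ) (projM_orthogonal_colSpace_mul X)
  rw [Pperp, ← Matrix.mul_assoc, ← Matrix.mul_assoc, h, Matrix.zero_mul, Matrix.zero_mul]

lemma mul_transpose_Pperp {m₁ m₂ : ℕ} (X T : Matrix (Fin m₁) (Fin m₂) ℝ) :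
    X * (Pperp X T)ᵀ = 0 := by
  have h : X * projM (colSpace Xᵀ)ᗮ = 0 := by
    simpa [projM_transpose] using congrArg (·ᵀ) (projM_orthogonal_colSpace_mul Xᵀ)
  rw [Pperp, transpose_mul, transpose_mul, projM_transpose, ← Matrix.mul_assoc, h,
    Matrix.zero_mul]

lemma nucNorm_eq_trace_sqrt {m₁ m₂ : ℕ} (X : Matrix (Fin m₁) (Fin m₂) ℝ) :
    nucNorm X = (CFC.sqrt (Xᵀ * X)).trace := by
  rw [(posSemidef_transpose_mul_self X).trace_sqrt]
  rfl

lemma nucNorm_add_of_transpose_mul_eq_zero {m₁ m₂ : ℕ} {X Y : Matrix (Fin m₁) (Fin m₂) ℝ}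
    (hXY : Xᵀ * Y = 0) (hXYt : X * Yᵀ = 0) : nucNorm (X + Y) = nucNorm X + nucNorm Y := by
  have hYX : Yᵀ * X = 0 := by rw [← transpose_transpose X, ← transpose_mul, hXY, transpose_zero]
  have hsum : (X + Y)ᵀ * (X + Y) = Xᵀ * X + Yᵀ * Y := by
    rw [transpose_add, Matrix.add_mul, Matrix.mul_add, Matrix.mul_add, hXY, hYX, add_zero,
      zero_add]
  have hprod : (Xᵀ * X) * (Yᵀ * Y) = 0 := by
    rw [Matrix.mul_assoc, ← Matrix.mul_assoc X, hXYt, Matrix.zero_mul, Matrix.mul_zero]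
  rw [nucNorm_eq_trace_sqrt, nucNorm_eq_trace_sqrt, nucNorm_eq_trace_sqrt, hsum,
    (posSemidef_transpose_mul_self X).sqrt_add_of_mul_eq_zero
      (posSemidef_transpose_mul_self Y) hprod, trace_add]

/-- Lemma 1(i): `‖X + P⊥_X(X̃)‖_{σ,1} = ‖X‖_{σ,1} + ‖P⊥_X(X̃)‖_{σ,1}`. -/
theorem nucNorm_add_Pperp (m₁ m₂ : ℕ) (X Xt : Matrix (Fin m₁) (Fin m₂) ℝ) :
    nucNorm (X + Pperp X Xt) = nucNorm X + nucNorm (Pperp X Xt) :=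
  nucNorm_add_of_transpose_mul_eq_zero (transpose_mul_Pperp X Xt) (mul_transpose_Pperp X Xt)
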